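/- Let Σ ∈ ℝ^{p×p} be symmetric positive definite, ϑ̂ ∈ ℝ^p, and let Δ = I_w ⊗ ϑ̃ᵀ where ϑ̃ = ϑ − ϑ̂. Then ϑ̃ᵀ Σ⁻¹ ϑ̃ ≤ 1 if and only if for every positive semidefinite Λ ∈ ℝ^{w×w} the block matrix condition [Δᵀ; I_w]ᵀ · diag(−Λ ⊗ Σ⁻¹, Λ) · [Δᵀ; I_w] ⪰ 0 holds, i.e., Λ − (I_w ⊗ ϑ̃ᵀ)(Λ ⊗ Σ⁻¹)(I_w ⊗ ϑ̃) ⪰ 0 for all Λ ⪰ 0. -/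

import Mathlib

/-!
By the mixed-product property, `(I ⊗ ϑ̃ᵀ)(Λ ⊗ Σ⁻¹)(I ⊗ ϑ̃) = Λ ⊗ (ϑ̃ᵀ Σ⁻¹ ϑ̃) = c Λ` with
`c = ϑ̃ᵀ Σ⁻¹ ϑ̃`. The condition thus reads `(1 - c) Λ ⪰ 0` for every `Λ ⪰ 0`, which holds iff
`1 - c ≥ 0`: testing `Λ = I` exhibits `1 - c` as a diagonal entry.
-/

open Matrix Kronecker

namespace Matrix

variable {R m n ι : Type*}

theorem replicateRow_mul_mul_replicateCol [CommSemiring R] [Fintype n] (S : Matrix n n R)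
    (v : n → R) :
    replicateRow ι v * S * replicateCol ι v = of fun _ _ => v ⬝ᵥ S *ᵥ v := by
  rw [Matrix.mul_assoc, ← replicateCol_mulVec, replicateRow_mul_replicateCol]

theorem reindex_prodUnique_kronecker [CommSemiring R] [Unique ι] (A : Matrix m m R)
    (B : Matrix ι ι R) :
    reindex (Equiv.prodUnique m ι) (Equiv.prodUnique m ι) (A ⊗ₖ B) = B default default • A := by
  ext i j
  simp [mul_comm]

theorem reindex_one_kronecker_replicateRow_mul_kronecker_mul [CommSemiring R] [Fintype m]
    [DecidableEq m] [Fintype n] [Unique ι] (Λ : Matrix m m R) (S : Matrix n n R) (v : n → R) :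
    reindex (Equiv.prodUnique m ι) (Equiv.prodUnique m ι)
        (((1 : Matrix m m R) ⊗ₖ replicateRow ι v) * (Λ ⊗ₖ S) *
          ((1 : Matrix m m R) ⊗ₖ replicateCol ι v)) =
      (v ⬝ᵥ S *ᵥ v) • Λ := by
  rw [← mul_kronecker_mul, ← mul_kronecker_mul, Matrix.one_mul, Matrix.mul_one,
    replicateRow_mul_mul_replicateCol, reindex_prodUnique_kronecker, of_apply]

theorem forall_smul_posSemidef_iff [CommRing R] [PartialOrder R] [StarRing R]
    [StarOrderedRing R] [Fintype m] [DecidableEq m] [Nonempty m] (a : R) :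
    (∀ Λ : Matrix m m R, Λ.PosSemidef → (a • Λ).PosSemidef) ↔ 0 ≤ a := by
  refine ⟨fun h => ?_, fun ha Λ hΛ => hΛ.smul ha⟩
  obtain ⟨i⟩ := ‹Nonempty m›
  simpa using (h 1 PosSemidef.one).diag_nonneg (i := i)

end Matrix

theorem stmt_1_general (w p : ℕ) (hw : 0 < w)
    (Sig : Matrix (Fin p) (Fin p) ℝ)
    (ϑ ϑhat : Fin p → ℝ) :
    (ϑ - ϑhat) ⬝ᵥ Sig⁻¹ *ᵥ (ϑ - ϑhat) ≤ 1 ↔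
      ∀ Λ : Matrix (Fin w) (Fin w) ℝ, Λ.PosSemidef →
        (Λ - Matrix.reindex (Equiv.prodUnique (Fin w) (Fin 1)) (Equiv.prodUnique (Fin w) (Fin 1))
            (((1 : Matrix (Fin w) (Fin w) ℝ) ⊗ₖ
                Matrix.of (fun (_ : Fin 1) (j : Fin p) => (ϑ - ϑhat) j)) *
              (Λ ⊗ₖ Sig⁻¹) *
              ((1 : Matrix (Fin w) (Fin w) ℝ) ⊗ₖ
                Matrix.of (fun (j : Fin p) (_ : Fin 1) => (ϑ - ϑhat) j)))).PosSemidef := by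
  have : Nonempty (Fin w) := Fin.pos_iff_nonempty.mp hw
  set c := (ϑ - ϑhat) ⬝ᵥ Sig⁻¹ *ᵥ (ϑ - ϑhat)
  have hcollapse (Λ : Matrix (Fin w) (Fin w) ℝ) : Λ - reindex (Equiv.prodUnique (Fin w) (Fin 1))
      (Equiv.prodUnique (Fin w) (Fin 1))
      (((1 : Matrix (Fin w) (Fin w) ℝ) ⊗ₖ replicateRow (Fin 1) (ϑ - ϑhat)) * (Λ ⊗ₖ Sig⁻¹) *
        ((1 : Matrix (Fin w) (Fin w) ℝ) ⊗ₖ replicateCol (Fin 1) (ϑ - ϑhat))) = (1 - c) • Λ := by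
    rw [reindex_one_kronecker_replicateRow_mul_kronecker_mul, sub_smul, one_smul]
  -- the `Matrix.of` row and column of the statement are `replicateRow`/`replicateCol` unfolded
  simp only [← replicateRow.eq_def, ← replicateCol.eq_def, hcollapse]
  rw [forall_smul_posSemidef_iff, sub_nonneg]

/-- the ellipsoid condition `ϑ̃ᵀ Σ⁻¹ ϑ̃ ≤ 1` holds iff for every PSD multiplier `Λ`
one has `Λ − (I_w ⊗ ϑ̃ᵀ)(Λ ⊗ Σ⁻¹)(I_w ⊗ ϑ̃) ⪰ 0`. -/
theorem stmt_1 (w p : ℕ) (hw : 0 < w)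
    (Sig : Matrix (Fin p) (Fin p) ℝ) (hSig : Sig.PosDef)
    (ϑ ϑhat : Fin p → ℝ) :
    (ϑ - ϑhat) ⬝ᵥ Sig⁻¹ *ᵥ (ϑ - ϑhat) ≤ 1 ↔
      ∀ Λ : Matrix (Fin w) (Fin w) ℝ, Λ.PosSemidef →
        (Λ - Matrix.reindex (Equiv.prodUnique (Fin w) (Fin 1)) (Equiv.prodUnique (Fin w) (Fin 1))
            (((1 : Matrix (Fin w) (Fin w) ℝ) ⊗ₖ
                Matrix.of (fun (_ : Fin 1) (j : Fin p) => (ϑ - ϑhat) j)) *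
              (Λ ⊗ₖ Sig⁻¹) *
              ((1 : Matrix (Fin w) (Fin w) ℝ) ⊗ₖ
                Matrix.of (fun (j : Fin p) (_ : Fin 1) => (ϑ - ϑhat) j)))).PosSemidef :=
  stmt_1_general w p hw Sig ϑ ϑhat
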